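/- Let S be a vertex ordering of a graph, v a vertex, and S' obtained from S by moving v to a later position (p_S(v) < p_{S'}(v)) while keeping the relative order of all other vertices. If every vertex u in the closed neighborhood N[v] of v whose position in S' lies in the interval [p_S(v), p_{S'}(v)] receives the same first-fit color in S and in S', then every vertex of the graph receives the same first-fit color in S and in S'. -/

import Mathlib

open SimpleGraph

/-- First-fit coloring along a vertex sequence: each vertex in turn receives the
smallest positive integer not used on its already-colored neighbors. Uncolored
vertices have color `0`. -/
noncomputable def firstFit {V : Type*} [DecidableEq V] (G : SimpleGraph V) (l : List V) :
    V → ℕ :=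
  l.foldl (fun c v => Function.update c v
    (sInf {k | 0 < k ∧ ∀ u, G.Adj v u → c u ≠ k})) (fun _ => 0)

/-- `l` is an ordering of all vertices. -/
def IsOrdering {V : Type*} (l : List V) : Prop := l.Nodup ∧ ∀ v : V, v ∈ l

/-- `l` is a connected ordering: every vertex after the first has a neighbor earlier. -/
def IsConnectedOrdering {V : Type*} (G : SimpleGraph V) (l : List V) : Prop :=
  IsOrdering l ∧ ∀ i (hi : i < l.length), 0 < i → ∃ u ∈ l.take i, G.Adj u (l.get ⟨i, hi⟩)

/-- Number of colors used by first-fit along `l`. -/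
noncomputable def numColors {V : Type*} [Fintype V] [DecidableEq V] (G : SimpleGraph V)
    (l : List V) : ℕ :=
  Finset.univ.sup (firstFit G l)

/-- The Grundy number: maximum number of first-fit colors over all vertex orderings. -/
noncomputable def grundy {V : Type*} [Fintype V] [DecidableEq V] (G : SimpleGraph V) : ℕ :=
  sSup {k | ∃ l : List V, IsOrdering l ∧ k = numColors G l}

/-- The connected Grundy number: maximum number of first-fit colors over connected orderings. -/
noncomputable def connGrundy {V : Type*} [Fintype V] [DecidableEq V] (G : SimpleGraph V) : ℕ :=
  sSup {k | ∃ l : List V, IsConnectedOrdering G l ∧ k = numColors G l}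

/-! Induct on the position in `S'`. Moving `v` preserves the relative order of all other vertices,
so a vertex `u` has the same earlier neighbors in `S` and `S'` unless `v` itself jumps over `u`
along an edge, i.e. `u ∈ N(v)` lies in the window `[p_S(v), p_{S'}(v)]`; together with `v` these
are exactly the vertices where equality is assumed. Any other vertex gets the least positive
color missing among its earlier neighbors, whose colors agree by induction. -/

namespace List

variable {α : Type*} [DecidableEq α]

def move (l : List α) (a : α) (n : ℕ) : List α :=
  (l.erase a).insertIdx n a

theorem idxOf_insertIdx_of_ne {a b : α} (hb : b ≠ a) :
    ∀ (n : ℕ) (l : List α),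
      (l.insertIdx n a).idxOf b = if l.idxOf b < n then l.idxOf b else l.idxOf b + 1
  | 0, l => by rw [insertIdx_zero, idxOf_cons_ne l hb.symm]; simp
  | n + 1, [] => by simp
  | n + 1, c :: l => by
    rw [insertIdx_succ_cons]
    by_cases hbc : b = c
    · subst hbc
      simp
    · rw [idxOf_cons_ne _ (Ne.symm hbc), idxOf_cons_ne _ (Ne.symm hbc),
        idxOf_insertIdx_of_ne hb n l]
      split_ifs <;> omega

theorem idxOf_insertIdx_self {a : α} {l : List α} (ha : a ∉ l) {n : ℕ} (hn : n ≤ l.length) :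
    (l.insertIdx n a).idxOf a = n := by
  induction l generalizing n with
  | nil => simp_all
  | cons c l ih =>
    rcases n with _ | n
    · simp
    · have hca : c ≠ a := by rintro rfl; exact ha mem_cons_self
      rw [insertIdx_succ_cons, idxOf_cons_ne _ hca,
        ih (fun h => ha (mem_cons_of_mem c h)) (Nat.le_of_succ_le_succ hn)]

theorem idxOf_move_self {l : List α} (hl : l.Nodup) {a : α} {n : ℕ}
    (hn : n ≤ (l.erase a).length) : (l.move a n).idxOf a = n :=
  idxOf_insertIdx_self hl.not_mem_erase hn

theorem move_idxOf_self {l : List α} {a : α} (ha : a ∈ l) : l.move a (l.idxOf a) = l := by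
  have hlt : l.idxOf a < l.length := idxOf_lt_length_iff.2 ha
  conv_rhs => rw [← insertIdx_eraseIdx_getElem hlt]
  rw [eraseIdx_idxOf_eq_erase, getElem_idxOf hlt, move]

theorem idxOf_eq_ite_idxOf_erase {l : List α} {a b : α} (ha : a ∈ l) (hb : b ≠ a) :
    l.idxOf b =
      if (l.erase a).idxOf b < l.idxOf a then (l.erase a).idxOf b else (l.erase a).idxOf b + 1 := by
  conv_lhs => rw [← move_idxOf_self ha]
  exact idxOf_insertIdx_of_ne hb _ _

theorem idxOf_lt_idxOf_move_iff {l : List α} {a b c : α} (ha : a ∈ l) (hb : b ≠ a) (hc : c ≠ a)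
    (n : ℕ) : (l.move a n).idxOf b < (l.move a n).idxOf c ↔ l.idxOf b < l.idxOf c := by
  simp only [move, idxOf_insertIdx_of_ne hb, idxOf_insertIdx_of_ne hc,
    idxOf_eq_ite_idxOf_erase ha hb, idxOf_eq_ite_idxOf_erase ha hc]
  split_ifs <;> omega

theorem idxOf_lt_idxOf_move_iff_of_not_mem_Icc {l : List α} {a b : α} (ha : a ∈ l) (hb : b ≠ a)
    {n : ℕ} (hn : l.idxOf a ≤ n) (hout : (l.move a n).idxOf b ∉ Set.Icc (l.idxOf a) n) :
    l.idxOf a < l.idxOf b ↔ n < (l.move a n).idxOf b := by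
  rw [Set.mem_Icc] at hout
  simp only [move, idxOf_insertIdx_of_ne hb] at hout ⊢
  rw [idxOf_eq_ite_idxOf_erase ha hb]
  split_ifs at hout ⊢ <;> omega

end List

theorem IsOrdering.move {V : Type*} [DecidableEq V] {l : List V} (hl : IsOrdering l) {a : V}
    {n : ℕ} (hn : n ≤ (l.erase a).length) : IsOrdering (l.move a n) := by
  refine ⟨(List.perm_insertIdx a _ hn).nodup_iff.2 ?_, fun u => ?_⟩
  · exact List.nodup_cons.2 ⟨hl.1.not_mem_erase, hl.1.erase a⟩
  · rw [List.move, List.mem_insertIdx hn]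
    by_cases hua : u = a
    · exact Or.inl hua
    · exact Or.inr ((List.mem_erase_of_ne hua).2 (hl.2 u))

section FirstFit

variable {V : Type*} [DecidableEq V] (G : SimpleGraph V)

noncomputable def firstFitStep (c : V → ℕ) (v : V) : V → ℕ :=
  Function.update c v (sInf {k | 0 < k ∧ ∀ u, G.Adj v u → c u ≠ k})

theorem firstFit_eq_foldl (l : List V) : firstFit G l = l.foldl (firstFitStep G) fun _ => 0 :=
  rfl

theorem foldl_firstFitStep_apply_of_not_mem (c : V → ℕ) {l : List V} {u : V} (hu : u ∉ l) :
    l.foldl (firstFitStep G) c u = c u := by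
  induction l generalizing c with
  | nil => rfl
  | cons a l ih =>
    have hua : u ≠ a := by rintro rfl; exact hu List.mem_cons_self
    rw [List.foldl_cons, ih _ (fun h => hu (List.mem_cons_of_mem a h)), firstFitStep,
      Function.update_of_ne hua]

theorem firstFit_append_apply_of_not_mem (l₁ : List V) {l₂ : List V} {u : V} (hu : u ∉ l₂) :
    firstFit G (l₁ ++ l₂) u = firstFit G l₁ u := by
  rw [firstFit_eq_foldl, List.foldl_append, foldl_firstFitStep_apply_of_not_mem G _ hu,
    firstFit_eq_foldl]

theorem firstFit_apply_of_not_mem {l : List V} {u : V} (hu : u ∉ l) : firstFit G l u = 0 :=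
  firstFit_append_apply_of_not_mem G [] hu

theorem firstFit_append_cons_self (l₁ : List V) {l₂ : List V} {u : V} (hu : u ∉ l₂) :
    firstFit G (l₁ ++ u :: l₂) u = sInf {k | 0 < k ∧ ∀ w, G.Adj u w → firstFit G l₁ w ≠ k} := by
  rw [firstFit_eq_foldl, List.foldl_append, List.foldl_cons,
    foldl_firstFitStep_apply_of_not_mem G _ hu, ← firstFit_eq_foldl, firstFitStep,
    Function.update_self]

theorem firstFit_apply_eq_sInf {l : List V} (hl : l.Nodup) {u : V} (hu : u ∈ l) :
    firstFit G l u = sInf {k | 0 < k ∧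
      ∀ w, G.Adj u w → l.idxOf w < l.idxOf u → firstFit G l w ≠ k} := by
  obtain ⟨l₁, l₂, rfl⟩ := List.append_of_mem hu
  obtain ⟨hu₁, hu₂⟩ : u ∉ l₁ ∧ u ∉ l₂ :=
    not_or.1 (List.mem_append.not.1 (List.nodup_cons.1 (List.nodup_middle.1 hl)).1)
  have hidx : ∀ w, (l₁ ++ u :: l₂).idxOf w < (l₁ ++ u :: l₂).idxOf u ↔ w ∈ l₁ := by
    intro w
    rw [List.idxOf_append_of_notMem hu₁, List.idxOf_cons_self, Nat.add_zero]
    by_cases hw : w ∈ l₁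
    · simp [List.idxOf_append_of_mem hw, List.idxOf_lt_length_iff.2 hw, hw]
    · simp [List.idxOf_append_of_notMem hw, hw]
  have hprefix : ∀ w ∈ l₁, firstFit G (l₁ ++ u :: l₂) w = firstFit G l₁ w := fun w hw =>
    firstFit_append_apply_of_not_mem G l₁ (List.disjoint_of_nodup_append hl hw)
  rw [firstFit_append_cons_self G l₁ hu₂]
  congr 1
  ext k
  refine and_congr_right fun hk => forall_congr' fun w => forall_congr' fun _ => ?_
  rw [hidx]
  by_cases hw : w ∈ l₁
  · simp [hw, hprefix w hw]
  · simp [hw, firstFit_apply_of_not_mem G hw, hk.ne]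

theorem firstFit_eq_of_forall_eq_or_neighbor_order_iff {l l' : List V} (hl : IsOrdering l)
    (hl' : IsOrdering l')
    (h : ∀ u, firstFit G l u = firstFit G l' u ∨
      ∀ w, G.Adj u w → (l.idxOf w < l.idxOf u ↔ l'.idxOf w < l'.idxOf u)) :
    firstFit G l = firstFit G l' := by
  funext u
  induction hn : l'.idxOf u using Nat.strong_induction_on generalizing u with
  | _ n ih =>
  subst hn
  rcases h u with heq | horder
  · exact heq
  rw [firstFit_apply_eq_sInf G hl.1 (hl.2 u), firstFit_apply_eq_sInf G hl'.1 (hl'.2 u)]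
  congr 1
  ext k
  refine and_congr_right fun _ => forall_congr' fun w => forall_congr' fun huw => ?_
  rw [horder w huw]
  exact imp_congr_right fun hlt => by rw [ih _ hlt w rfl]

end FirstFit

theorem stmt8 {V : Type*} [DecidableEq V] (G : SimpleGraph V) (S : List V)
    (hS : IsOrdering S) (v : V) (p' : ℕ) (hp' : p' ≤ (S.erase v).length)
    (S' : List V) (hS' : S' = (S.erase v).insertIdx p' v)
    (hmove : S.idxOf v < S'.idxOf v)
    (hcol : ∀ u, (u = v ∨ G.Adj u v) → S.idxOf v ≤ S'.idxOf u →
      S'.idxOf u ≤ S'.idxOf v → firstFit G S u = firstFit G S' u) :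
    firstFit G S = firstFit G S' := by
  obtain rfl : S' = S.move v p' := hS'
  have hv' : (S.move v p').idxOf v = p' := List.idxOf_move_self hS.1 hp'
  rw [hv'] at hmove hcol
  refine firstFit_eq_of_forall_eq_or_neighbor_order_iff G hS (hS.move hp') fun u => ?_
  by_cases hwin : (u = v ∨ G.Adj u v) ∧ (S.move v p').idxOf u ∈ Set.Icc (S.idxOf v) p'
  · exact Or.inl (hcol u hwin.1 hwin.2.1 hwin.2.2)
  have huv : u ≠ v := by
    rintro rfl
    exact hwin ⟨Or.inl rfl, hv'.symm ▸ ⟨hmove.le, le_rfl⟩⟩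
  refine Or.inr fun w huw => ?_
  rcases eq_or_ne w v with rfl | hwv
  · rw [hv']
    exact List.idxOf_lt_idxOf_move_iff_of_not_mem_Icc (hS.2 w) huv hmove.le
      fun h => hwin ⟨Or.inr huw, h⟩
  · exact (List.idxOf_lt_idxOf_move_iff (hS.2 v) hwv huv p').symm
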